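/- In 𝔤_0, set ĥ₀ = 2e₀ − e₁, ĥ₁ = (1/2)e₂, ĥ₂ = e₁, and let g_ν (ν > 0) be the inner product with matrix [[1, 1/2, 0], [1/2, 1, 0], [0, 0, ν]] in the basis e₀, e₁, e₂. Then (ĥ₀, ĥ₁, ĥ₂) is a basis of 𝔤_0 with [ĥ₀, ĥ₁] = 0, [ĥ₀, ĥ₂] = 0 and [ĥ₁, ĥ₂] = ĥ₂ (so 𝔤_0 is the direct sum of the central line ℝĥ₀ and the 2-dimensional non-abelian subalgebra spanned by ĥ₁, ĥ₂, the Lie algebra of the real hyperbolic plane), and the Gram matrix of g_ν in the basis ĥ₀, ĥ₁, ĥ₂ is diag(3, ν/4, 1); in particular the splitting is g_ν-orthogonal. -/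

import Mathlib

noncomputable section

/-- The underlying space of the 3-dimensional Lie algebras under consideration. -/
abbrev V3 : Type := Fin 3 → ℝ

/-- The bracket of the Lie algebra `𝔤_c`:
`[e₀,e₁] = 0`, `[e₂,e₀] = e₁`, `[e₂,e₁] = −c e₀ + 2 e₁`, extended bilinearly. -/
def braC (c : ℝ) (x y : V3) : V3 :=
  ![-c * (x 2 * y 1 - y 2 * x 1),
    (x 2 * y 0 - y 2 * x 0) + 2 * (x 2 * y 1 - y 2 * x 1),
    0]

/-- The inner product `g_ν` on `𝔤_0`, with matrix `[[1,1/2,0],[1/2,1,0],[0,0,ν]]`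
in the basis `e₀,e₁,e₂`. -/
def gnu (ν : ℝ) (x y : V3) : ℝ :=
  x 0 * y 0 + (1/2) * (x 0 * y 1 + x 1 * y 0) + x 1 * y 1 + ν * (x 2 * y 2)

/-- `ĥ₀ = 2e₀ − e₁`. -/
def h0 : V3 := ![2, -1, 0]

/-- `ĥ₁ = (1/2) e₂`. -/
def h1 : V3 := ![0, 0, 1/2]

/-- `ĥ₂ = e₁`. -/
def h2 : V3 := ![0, 1, 0]

/-!
Write `x = (x₀/2) ĥ₀ + 2x₂ ĥ₁ + (x₁ + x₀/2) ĥ₂`; three spanning vectors of a 3-dimensional space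
form a basis. In `𝔤_0` every bracket is a multiple of `e₁ = ĥ₂`, and `ĥ₀` pairs to zero with
both `e₁` and `e₂`, so the brackets and the Gram matrix reduce to evaluating two coefficients.
-/

lemma eq_smul_h0_add_smul_h1_add_smul_h2 (x : V3) :
    x = (x 0 / 2) • h0 + (2 * x 2) • h1 + (x 1 + x 0 / 2) • h2 := by
  funext i
  fin_cases i <;> simp [h0, h1, h2]
  ring

lemma span_h0_h1_h2 : Submodule.span ℝ {h0, h1, h2} = (⊤ : Submodule ℝ V3) := by
  refine eq_top_iff.2 fun x _ => ?_
  rw [eq_smul_h0_add_smul_h1_add_smul_h2 x]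
  refine Submodule.add_mem _ (Submodule.add_mem _ ?_ ?_) ?_ <;>
    exact Submodule.smul_mem _ _ (Submodule.subset_span (by simp))

lemma linearIndependent_h0_h1_h2 : LinearIndependent ℝ ![h0, h1, h2] := by
  refine linearIndependent_of_top_le_span_of_card_eq_finrank ?_ (by simp)
  rw [Matrix.range_cons, Matrix.range_cons_cons_empty, Set.singleton_union, span_h0_h1_h2]

lemma braC_zero_eq_smul_h2 (x y : V3) :
    braC 0 x y = (x 2 * y 0 - y 2 * x 0 + 2 * (x 2 * y 1 - y 2 * x 1)) • h2 := by
  funext i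
  fin_cases i <;> simp [braC, h2]

theorem stmt5_general (ν : ℝ) :
    LinearIndependent ℝ ![h0, h1, h2] ∧
    Submodule.span ℝ {h0, h1, h2} = (⊤ : Submodule ℝ V3) ∧
    braC 0 h0 h1 = 0 ∧ braC 0 h0 h2 = 0 ∧ braC 0 h1 h2 = h2 ∧
    gnu ν h0 h0 = 3 ∧ gnu ν h1 h1 = ν/4 ∧ gnu ν h2 h2 = 1 ∧
    gnu ν h0 h1 = 0 ∧ gnu ν h0 h2 = 0 ∧ gnu ν h1 h2 = 0 := by
  refine ⟨linearIndependent_h0_h1_h2, span_h0_h1_h2, ?_⟩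
  simp only [braC_zero_eq_smul_h2, gnu, h0, h1, h2]
  norm_num [Matrix.cons_val_two, Matrix.tail_cons, Matrix.head_cons, div_eq_mul_inv]

/-- `(ĥ₀, ĥ₁, ĥ₂)` is a basis of `𝔤_0` with `[ĥ₀,ĥ₁] = [ĥ₀,ĥ₂] = 0`
and `[ĥ₁,ĥ₂] = ĥ₂`, and the Gram matrix of `g_ν` in this basis is `diag(3, ν/4, 1)`;
in particular the splitting `ℝĥ₀ ⊕ span(ĥ₁,ĥ₂)` is `g_ν`-orthogonal. -/
theorem stmt5 (ν : ℝ) (hν : 0 < ν) :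
    LinearIndependent ℝ ![h0, h1, h2] ∧
    Submodule.span ℝ {h0, h1, h2} = (⊤ : Submodule ℝ V3) ∧
    braC 0 h0 h1 = 0 ∧ braC 0 h0 h2 = 0 ∧ braC 0 h1 h2 = h2 ∧
    gnu ν h0 h0 = 3 ∧ gnu ν h1 h1 = ν/4 ∧ gnu ν h2 h2 = 1 ∧
    gnu ν h0 h1 = 0 ∧ gnu ν h0 h2 = 0 ∧ gnu ν h1 h2 = 0 :=
  stmt5_general ν
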